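/- arXiv:1801.10352 — 9 statements merged into one kernel-verified Lean document; each statement's English description precedes it below -/
import Mathlib

section
/- For any complex matrix c : Matrix (Fin m) (Fin n) ℂ, the von Neumann entropies of the two reduced density matrices of the corresponding pure state agree: S(c * cᴴ) = S(cᴴ * c), i.e. ∑ᵢ negMulLog(λᵢ(c * cᴴ)) = ∑_μ negMulLog(λ_μ(cᴴ * c)), where the eigenvalues are those given by the spectral theorem for the Hermitian matrices c * cᴴ and cᴴ * c. (This is the statement S_A = S_B for a pure bipartite state.) -/
/-! `X ^ card n * χ(A * B) = X ^ card m * χ(B * A)`, so `A * B` and `B * A` have the same nonzero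
eigenvalues with multiplicity; the eigenvalue sums of any `f` with `f 0 = 0` therefore agree, and
`negMulLog 0 = 0`. -/

open Polynomial

theorem Multiset.sum_map_eq_of_replicate_zero_add {α M : Type*} [Zero α] [AddCommMonoid M]
    {s t : Multiset α} {a b : ℕ} (h : replicate a 0 + s = replicate b 0 + t)
    {g : α → M} (hg : g 0 = 0) : (s.map g).sum = (t.map g).sum := by
  simpa [hg] using congrArg (fun u => (u.map g).sum) h

namespace Matrix

variable {𝕜 : Type*} [RCLike 𝕜] {m n : Type*} [Fintype m] [Fintype n] [DecidableEq m]
  [DecidableEq n]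

theorem replicate_zero_add_roots_charpoly_mul_comm (A : Matrix m n 𝕜) (B : Matrix n m 𝕜) :
    Multiset.replicate (Fintype.card n) 0 + (A * B).charpoly.roots =
      Multiset.replicate (Fintype.card m) 0 + (B * A).charpoly.roots := by
  have h := congrArg roots (charpoly_mul_comm' A B)
  rwa [roots_mul (mul_ne_zero (pow_ne_zero _ X_ne_zero) (A * B).charpoly_monic.ne_zero),
    roots_mul (mul_ne_zero (pow_ne_zero _ X_ne_zero) (B * A).charpoly_monic.ne_zero),
    roots_X_pow, roots_X_pow, Multiset.nsmul_singleton, Multiset.nsmul_singleton] at h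

theorem IsHermitian.sum_eigenvalues_mul_comm {A : Matrix m n 𝕜} {B : Matrix n m 𝕜}
    (hAB : (A * B).IsHermitian) (hBA : (B * A).IsHermitian) {f : ℝ → ℝ} (hf : f 0 = 0) :
    ∑ i, f (hAB.eigenvalues i) = ∑ j, f (hBA.eigenvalues j) := by
  have h := replicate_zero_add_roots_charpoly_mul_comm A B
  rw [hAB.roots_charpoly_eq_eigenvalues, hBA.roots_charpoly_eq_eigenvalues] at h
  have hsum := Multiset.sum_map_eq_of_replicate_zero_add h (g := f ∘ RCLike.re) (by simp [hf])
  simp only [Multiset.map_map, Function.comp_def, RCLike.ofReal_re] at hsum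
  exact hsum

end Matrix

/-- For a pure bipartite state, the entanglement entropies of the two reduced
density matrices agree: `S(c * cᴴ) = S(cᴴ * c)`. -/
theorem pure_state_entropies_agree
    (m n : ℕ) (c : Matrix (Fin m) (Fin n) ℂ) :
    (∑ i, Real.negMulLog
        ((Matrix.isHermitian_mul_conjTranspose_self c).eigenvalues i)) =
      (∑ j, Real.negMulLog
        ((Matrix.isHermitian_conjTranspose_mul_self c).eigenvalues j)) :=
  Matrix.IsHermitian.sum_eigenvalues_mul_comm _ _ Real.negMulLog_zero
end

section
/- Subadditivity of von Neumann entropy: let ρ be a density matrix indexed by (Fin a × Fin b) × (Fin a × Fin b), i.e. ρ is Hermitian, positive semidefinite, and has trace 1. Let ρ_A be the partial trace of ρ over the second factor and ρ_B the partial trace over the first factor. Then S(ρ) ≤ S(ρ_A) + S(ρ_B). -/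
open scoped Classical ComplexOrder

/-- Von Neumann entropy of a (Hermitian) matrix: the sum of `negMulLog` of its
eigenvalues, given by the spectral theorem. -/
noncomputable def vnEntropy {n : Type*} [Fintype n] [DecidableEq n]
    (ρ : Matrix n n ℂ) : ℝ :=
  if h : ρ.IsHermitian then ∑ i, Real.negMulLog (h.eigenvalues i) else 0

/-- Partial trace over the second tensor factor. -/
noncomputable def ptraceB {a b : ℕ}
    (ρ : Matrix (Fin a × Fin b) (Fin a × Fin b) ℂ) : Matrix (Fin a) (Fin a) ℂ :=
  Matrix.of fun i i' => ∑ μ : Fin b, ρ (i, μ) (i', μ)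

/-- Partial trace over the first tensor factor. -/
noncomputable def ptraceA {a b : ℕ}
    (ρ : Matrix (Fin a × Fin b) (Fin a × Fin b) ℂ) : Matrix (Fin b) (Fin b) ℂ :=
  Matrix.of fun j j' => ∑ i : Fin a, ρ (i, j) (i, j')

/-!
Let `V` and `W` be unitaries diagonalizing `ρ_A` and `ρ_B`. The diagonal of
`(V ⊗ W)† ρ (V ⊗ W)` is a probability distribution `r` on `Fin a × Fin b`, and since partial traces
commute with conjugation by local unitaries, its marginals `p` and `q` are the spectra of `ρ_A` and
`ρ_B`. The diagonal of a unitary conjugate `U Λ U†` of the spectrum `Λ` of `ρ` is the image of `Λ`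
under the doubly stochastic matrix `(|U_kj|²)`, so concavity of `negMulLog` gives `S(ρ) ≤ H(r)`.
Classical subadditivity `H(r) ≤ H(p) + H(q)`, i.e. Gibbs' inequality for `r` against `p ⊗ q`,
finishes the proof.
-/

open Matrix Kronecker Real

theorem Real.negMulLog_le_neg_mul_log_add_sub {r s : ℝ} (hr : 0 ≤ r) (hs : 0 < s) :
    negMulLog r ≤ -(r * log s) + (s - r) := by
  rcases hr.eq_or_lt with rfl | hr
  · simpa using hs.le
  have hlog : log (s / r) ≤ s / r - 1 := log_le_sub_one_of_pos (div_pos hs hr)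
  rw [log_div hs.ne' hr.ne'] at hlog
  have hscale : r * (s / r - 1) = s - r := by field_simp
  have := mul_le_mul_of_nonneg_left hlog hr.le
  rw [hscale] at this
  rw [negMulLog]
  linarith

theorem sum_negMulLog_le_sum_negMulLog_marginals {α β : Type*} [Fintype α] [Fintype β]
    {r : α → β → ℝ} {p : α → ℝ} {q : β → ℝ} (hr : ∀ i μ, 0 ≤ r i μ)
    (hp : ∀ i, ∑ μ, r i μ = p i) (hq : ∀ μ, ∑ i, r i μ = q μ) (hp_sum : ∑ i, p i = 1) :
    ∑ i, ∑ μ, negMulLog (r i μ) ≤ ∑ i, negMulLog (p i) + ∑ μ, negMulLog (q μ) := by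
  have hr_sum : ∑ i, ∑ μ, r i μ = 1 := by simp only [hp, hp_sum]
  have hq_sum : ∑ μ, q μ = 1 := by simp only [← hq, ← hr_sum, Finset.sum_comm (γ := β)]
  have hgibbs : ∀ i μ, negMulLog (r i μ)
      ≤ -(r i μ * log (p i)) - r i μ * log (q μ) + (p i * q μ - r i μ) := by
    intro i μ
    have hrp : r i μ ≤ p i := hp i ▸ Finset.single_le_sum (fun ν _ => hr i ν) (Finset.mem_univ μ)
    have hrq : r i μ ≤ q μ := hq μ ▸ Finset.single_le_sum (fun j _ => hr j μ) (Finset.mem_univ i)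
    rcases (hr i μ).eq_or_lt with h | h
    · rw [← h] at hrp hrq ⊢
      simpa using mul_nonneg hrp hrq
    have hp_pos := h.trans_le hrp
    have hq_pos := h.trans_le hrq
    have := negMulLog_le_neg_mul_log_add_sub (hr i μ) (mul_pos hp_pos hq_pos)
    rwa [log_mul hp_pos.ne' hq_pos.ne', mul_add, neg_add, ← sub_eq_add_neg] at this
  have hp_log : ∑ i, ∑ μ, r i μ * log (p i) = ∑ i, p i * log (p i) := by
    simp only [← Finset.sum_mul, hp]
  have hq_log : ∑ i, ∑ μ, r i μ * log (q μ) = ∑ μ, q μ * log (q μ) := by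
    rw [Finset.sum_comm]
    simp only [← Finset.sum_mul, hq]
  have hpq : ∑ i, ∑ μ, p i * q μ = 1 := by rw [← Finset.sum_mul_sum, hp_sum, hq_sum, one_mul]
  calc ∑ i, ∑ μ, negMulLog (r i μ)
      ≤ ∑ i, ∑ μ, (-(r i μ * log (p i)) - r i μ * log (q μ) + (p i * q μ - r i μ)) :=
        Finset.sum_le_sum fun i _ => Finset.sum_le_sum fun μ _ => hgibbs i μ
    _ = ∑ i, negMulLog (p i) + ∑ μ, negMulLog (q μ) := by
        simp only [Finset.sum_add_distrib, Finset.sum_sub_distrib, Finset.sum_neg_distrib,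
          hp_log, hq_log, hpq, hr_sum, negMulLog, neg_mul]
        ring

theorem ConcaveOn.sum_le_sum_mulVec_of_mem_doublyStochastic {n : Type*} [Fintype n]
    [DecidableEq n] {s : Set ℝ} {f : ℝ → ℝ} (hf : ConcaveOn ℝ s f) {S : Matrix n n ℝ}
    (hS : S ∈ doublyStochastic ℝ n) {x : n → ℝ} (hx : ∀ j, x j ∈ s) :
    ∑ j, f (x j) ≤ ∑ i, f ((S *ᵥ x) i) :=
  calc ∑ j, f (x j) = ∑ i, ∑ j, S i j • f (x j) := by
        simp only [smul_eq_mul, Finset.sum_comm (γ := n), ← Finset.sum_mul,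
          sum_col_of_mem_doublyStochastic hS, one_mul]
    _ ≤ ∑ i, f (∑ j, S i j • x j) := Finset.sum_le_sum fun i _ =>
        hf.le_map_sum (fun j _ => nonneg_of_mem_doublyStochastic hS)
          (sum_row_of_mem_doublyStochastic hS i) fun j _ => hx j
    _ = ∑ i, f ((S *ᵥ x) i) := rfl

theorem Matrix.map_normSq_mem_doublyStochastic {n : Type*} [Fintype n] [DecidableEq n]
    {U : Matrix n n ℂ} (hU : U ∈ unitaryGroup n ℂ) :
    U.map Complex.normSq ∈ doublyStochastic ℝ n := by
  refine mem_doublyStochastic_iff_sum.mpr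
    ⟨fun i j => Complex.normSq_nonneg _, fun i => ?_, fun j => ?_⟩
  · have := congrFun (congrFun (mem_unitaryGroup_iff.mp hU) i) i
    simp only [mul_apply, star_apply, one_apply_eq, Complex.star_def, Complex.mul_conj] at this
    exact_mod_cast this
  · have := congrFun (congrFun (mem_unitaryGroup_iff'.mp hU) j) j
    simp only [mul_apply, star_apply, one_apply_eq, Complex.star_def,
      mul_comm (starRingEnd ℂ _), Complex.mul_conj] at this
    exact_mod_cast this

theorem Matrix.re_mul_diagonal_mul_star_apply_self {n : Type*} [Fintype n] [DecidableEq n]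
    (U : Matrix n n ℂ) (d : n → ℝ) (k : n) :
    ((U * diagonal (Complex.ofReal ∘ d) * star U) k k).re = (U.map Complex.normSq *ᵥ d) k := by
  rw [mul_apply]
  simp only [mul_diagonal, star_apply, Complex.star_def, Complex.re_sum, mulVec, dotProduct,
    map_apply, Function.comp_apply, mul_right_comm _ (Complex.ofReal _), Complex.mul_conj,
    ← Complex.ofReal_mul, Complex.ofReal_re]

theorem Matrix.PosSemidef.sum_negMulLog_eigenvalues_le_sum_negMulLog_diag {n : Type*} [Fintype n]
    [DecidableEq n] {ρ : Matrix n n ℂ} (hρ : ρ.PosSemidef) {K : Matrix n n ℂ}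
    (hK : K ∈ unitaryGroup n ℂ) :
    ∑ i, negMulLog (hρ.isHermitian.eigenvalues i) ≤ ∑ k, negMulLog ((star K * ρ * K) k k).re := by
  set U : Matrix n n ℂ := ↑hρ.isHermitian.eigenvectorUnitary
  have hQ : star K * U ∈ unitaryGroup n ℂ := mul_mem (Unitary.star_mem hK) (SetLike.coe_mem _)
  have hconj : star K * ρ * K =
      star K * U * diagonal (Complex.ofReal ∘ hρ.isHermitian.eigenvalues) * star (star K * U) := by
    conv_lhs => rw [hρ.isHermitian.spectral_theorem, Unitary.conjStarAlgAut_apply]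
    simp only [star_mul, star_star, Matrix.mul_assoc]
    rfl
  simp only [hconj, re_mul_diagonal_mul_star_apply_self]
  exact concaveOn_negMulLog.sum_le_sum_mulVec_of_mem_doublyStochastic
    (map_normSq_mem_doublyStochastic hQ) hρ.eigenvalues_nonneg

theorem Matrix.IsHermitian.re_star_eigenvectorUnitary_mul_mul_apply_self {n : Type*}
    [Fintype n] [DecidableEq n] {A : Matrix n n ℂ} (hA : A.IsHermitian) (i : n) :
    ((star (hA.eigenvectorUnitary : Matrix n n ℂ) * A * hA.eigenvectorUnitary) i i).re =
      hA.eigenvalues i := by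
  have := hA.conjStarAlgAut_star_eigenvectorUnitary
  rw [Unitary.conjStarAlgAut_apply, Unitary.coe_star, star_star] at this
  simp [this]

theorem ptraceB_star_kronecker_mul_mul_kronecker {a b : ℕ}
    (ρ : Matrix (Fin a × Fin b) (Fin a × Fin b) ℂ) (V : Matrix (Fin a) (Fin a) ℂ)
    {W : Matrix (Fin b) (Fin b) ℂ} (hW : W ∈ unitaryGroup (Fin b) ℂ) :
    ptraceB (star (V ⊗ₖ W) * ρ * (V ⊗ₖ W)) = star V * ptraceB ρ * V := by
  have hW_rows : ∀ ν ξ, ∑ μ, W ξ μ * star (W ν μ) = if ξ = ν then 1 else 0 := fun ν ξ => by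
    simpa [mul_apply, one_apply] using congrFun (congrFun (mem_unitaryGroup_iff.mp hW) ξ) ν
  ext i i'
  have hsum_traced : ∀ x y : Fin a × Fin b,
      ∑ μ, star (V ⊗ₖ W) (i, μ) x * ρ x y * (V ⊗ₖ W) y (i', μ) =
        star (V x.1 i) * ρ x y * V y.1 i' * if y.2 = x.2 then 1 else 0 := fun x y => by
    rw [← hW_rows, Finset.mul_sum]
    refine Finset.sum_congr rfl fun μ _ => ?_
    simp only [star_apply, kroneckerMap_apply, star_mul']
    ring
  simp only [ptraceB, of_apply, mul_apply, Finset.sum_mul]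
  rw [Finset.sum_comm]
  refine (Finset.sum_congr rfl fun y _ => Finset.sum_comm).trans ?_
  simp only [hsum_traced, mul_ite, mul_one, mul_zero, Fintype.sum_prod_type, Finset.sum_ite_eq,
    Finset.mem_univ, if_true]
  simp only [star_apply, Finset.mul_sum, Finset.sum_mul]
  exact Finset.sum_congr rfl fun k _ => Finset.sum_comm

theorem ptraceA_eq_ptraceB_submatrix_swap {a b : ℕ}
    (ρ : Matrix (Fin a × Fin b) (Fin a × Fin b) ℂ) :
    ptraceA ρ = ptraceB (ρ.submatrix Prod.swap Prod.swap) :=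
  rfl

theorem ptraceA_star_kronecker_mul_mul_kronecker {a b : ℕ}
    (ρ : Matrix (Fin a × Fin b) (Fin a × Fin b) ℂ) {V : Matrix (Fin a) (Fin a) ℂ}
    (hV : V ∈ unitaryGroup (Fin a) ℂ) (W : Matrix (Fin b) (Fin b) ℂ) :
    ptraceA (star (V ⊗ₖ W) * ρ * (V ⊗ₖ W)) = star W * ptraceA ρ * W := by
  have hswap : (V ⊗ₖ W).submatrix Prod.swap Prod.swap = W ⊗ₖ V := by
    ext
    simp [mul_comm]
  rw [ptraceA_eq_ptraceB_submatrix_swap, ptraceA_eq_ptraceB_submatrix_swap,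
    ← ptraceB_star_kronecker_mul_mul_kronecker _ _ hV, ← hswap, star_eq_conjTranspose,
    star_eq_conjTranspose, conjTranspose_submatrix]
  simp only [← Equiv.coe_prodComm, submatrix_mul_equiv]

theorem Matrix.IsHermitian.ptraceB {a b : ℕ} {ρ : Matrix (Fin a × Fin b) (Fin a × Fin b) ℂ}
    (hρ : ρ.IsHermitian) : (ptraceB ρ).IsHermitian :=
  IsHermitian.ext fun i i' => by simp only [_root_.ptraceB, of_apply, star_sum, hρ.apply]

theorem Matrix.IsHermitian.ptraceA {a b : ℕ} {ρ : Matrix (Fin a × Fin b) (Fin a × Fin b) ℂ}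
    (hρ : ρ.IsHermitian) : (ptraceA ρ).IsHermitian :=
  (hρ.submatrix Prod.swap).ptraceB

theorem vnEntropy_subadditivity_general {a b : ℕ}
    (ρ : Matrix (Fin a × Fin b) (Fin a × Fin b) ℂ)
    (hpos : ρ.PosSemidef) (htr : Matrix.trace ρ = 1) :
    vnEntropy ρ ≤ vnEntropy (ptraceB ρ) + vnEntropy (ptraceA ρ) := by
  have hA := hpos.isHermitian.ptraceB
  have hB := hpos.isHermitian.ptraceA
  set V : Matrix (Fin a) (Fin a) ℂ := ↑hA.eigenvectorUnitary
  set W : Matrix (Fin b) (Fin b) ℂ := ↑hB.eigenvectorUnitary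
  have hK : V ⊗ₖ W ∈ unitaryGroup (Fin a × Fin b) ℂ :=
    kronecker_mem_unitary hA.eigenvectorUnitary.2 hB.eigenvectorUnitary.2
  set M := star (V ⊗ₖ W) * ρ * (V ⊗ₖ W) with hM
  have hr : ∀ i μ, 0 ≤ (M (i, μ) (i, μ)).re := fun i μ =>
    (Complex.nonneg_iff.mp (hpos.conjTranspose_mul_mul_same _).diag_nonneg).1
  have hr_fst : ∀ i, ∑ μ, (M (i, μ) (i, μ)).re = hA.eigenvalues i := fun i => by
    rw [← hA.re_star_eigenvectorUnitary_mul_mul_apply_self, ← Complex.re_sum,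
      ← ptraceB_star_kronecker_mul_mul_kronecker _ _ hB.eigenvectorUnitary.2]
    rfl
  have hr_snd : ∀ μ, ∑ i, (M (i, μ) (i, μ)).re = hB.eigenvalues μ := fun μ => by
    rw [← hB.re_star_eigenvectorUnitary_mul_mul_apply_self, ← Complex.re_sum,
      ← ptraceA_star_kronecker_mul_mul_kronecker _ hA.eigenvectorUnitary.2]
    rfl
  have hp_sum : ∑ i, hA.eigenvalues i = 1 := by
    simp only [← hr_fst, ← Complex.re_sum, ← Fintype.sum_prod_type (f := fun k => M k k)]
    change (trace M).re = 1
    rw [hM, trace_mul_cycle, mem_unitaryGroup_iff.mp hK, Matrix.one_mul, htr, Complex.one_re]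
  rw [vnEntropy, dif_pos hpos.isHermitian, vnEntropy, dif_pos hA, vnEntropy, dif_pos hB]
  calc _ ≤ ∑ k, negMulLog (M k k).re :=
        hpos.sum_negMulLog_eigenvalues_le_sum_negMulLog_diag hK
    _ = ∑ i, ∑ μ, negMulLog (M (i, μ) (i, μ)).re := Fintype.sum_prod_type _
    _ ≤ _ := sum_negMulLog_le_sum_negMulLog_marginals hr hr_fst hr_snd hp_sum

/-- Subadditivity of von Neumann entropy: `S(ρ) ≤ S(ρ_A) + S(ρ_B)`. -/
theorem vnEntropy_subadditivity {a b : ℕ}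
    (ρ : Matrix (Fin a × Fin b) (Fin a × Fin b) ℂ)
    (hherm : ρ.IsHermitian) (hpos : ρ.PosSemidef) (htr : Matrix.trace ρ = 1) :
    vnEntropy ρ ≤ vnEntropy (ptraceB ρ) + vnEntropy (ptraceA ρ) :=
  vnEntropy_subadditivity_general ρ hpos htr
end

section
/- The monogamy of mutual information fails for general quantum states: let ρ be the density matrix indexed by (Fin 2 × Fin 2 × Fin 2) × (Fin 2 × Fin 2 × Fin 2) defined by ρ(x,y) = 1/2 if x = y and x ∈ {(0,0,0), (1,1,1)}, and ρ(x,y) = 0 otherwise (i.e. ρ = ½(|000⟩⟨000| + |111⟩⟨111|)). Then, with ρ_{AB}, ρ_{BC}, ρ_{CA} the two-party partial traces and ρ_A, ρ_B, ρ_C the one-party partial traces, one has S(ρ_{AB}) + S(ρ_{BC}) + S(ρ_{CA}) = 3·log 2 and S(ρ_A) + S(ρ_B) + S(ρ_C) + S(ρ) = 4·log 2; in particular S(ρ_{AB}) + S(ρ_{BC}) + S(ρ_{CA}) < S(ρ_A) + S(ρ_B) + S(ρ_C) + S(ρ), so the monogamy inequality S_{A∪B} + S_{B∪C} + S_{C∪A}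 ≥ S_A + S_B + S_C + S_{A∪B∪C} is violated. -/
open scoped Classical ComplexOrder

/-- Partial trace over the third tensor factor: `ρ_{AB}`. -/
noncomputable def rhoAB {a b c : ℕ}
    (ρ : Matrix (Fin a × Fin b × Fin c) (Fin a × Fin b × Fin c) ℂ) :
    Matrix (Fin a × Fin b) (Fin a × Fin b) ℂ :=
  Matrix.of fun p q => ∑ k : Fin c, ρ (p.1, p.2, k) (q.1, q.2, k)

/-- Partial trace over the first tensor factor: `ρ_{BC}`. -/
noncomputable def rhoBC {a b c : ℕ}
    (ρ : Matrix (Fin a × Fin b × Fin c) (Fin a × Fin b × Fin c) ℂ) :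
    Matrix (Fin b × Fin c) (Fin b × Fin c) ℂ :=
  Matrix.of fun p q => ∑ i : Fin a, ρ (i, p) (i, q)

/-- Partial trace over the second tensor factor: `ρ_{CA}` (indexed by `A × C`). -/
noncomputable def rhoCA {a b c : ℕ}
    (ρ : Matrix (Fin a × Fin b × Fin c) (Fin a × Fin b × Fin c) ℂ) :
    Matrix (Fin a × Fin c) (Fin a × Fin c) ℂ :=
  Matrix.of fun p q => ∑ j : Fin b, ρ (p.1, j, p.2) (q.1, j, q.2)

/-- Partial trace over the second and third tensor factors: `ρ_A`. -/
noncomputable def rhoA {a b c : ℕ}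
    (ρ : Matrix (Fin a × Fin b × Fin c) (Fin a × Fin b × Fin c) ℂ) :
    Matrix (Fin a) (Fin a) ℂ :=
  Matrix.of fun i i' => ∑ j : Fin b, ∑ k : Fin c, ρ (i, j, k) (i', j, k)

/-- Partial trace over the first and third tensor factors: `ρ_B`. -/
noncomputable def rhoB {a b c : ℕ}
    (ρ : Matrix (Fin a × Fin b × Fin c) (Fin a × Fin b × Fin c) ℂ) :
    Matrix (Fin b) (Fin b) ℂ :=
  Matrix.of fun j j' => ∑ i : Fin a, ∑ k : Fin c, ρ (i, j, k) (i, j', k)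

/-- Partial trace over the first and second tensor factors: `ρ_C`. -/
noncomputable def rhoC {a b c : ℕ}
    (ρ : Matrix (Fin a × Fin b × Fin c) (Fin a × Fin b × Fin c) ℂ) :
    Matrix (Fin c) (Fin c) ℂ :=
  Matrix.of fun k k' => ∑ i : Fin a, ∑ j : Fin b, ρ (i, j, k) (i, j, k')

/-- The classical three-qubit state `½(|000⟩⟨000| + |111⟩⟨111|)`. -/
noncomputable def ρGHZdiag :
    Matrix (Fin 2 × Fin 2 × Fin 2) (Fin 2 × Fin 2 × Fin 2) ℂ :=
  Matrix.of fun x y =>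
    if x = y ∧ (x = (0, 0, 0) ∨ x = (1, 1, 1)) then (1 / 2 : ℂ) else 0

/-!
The state `ρ` is diagonal, i.e. classical, and partial traces of a diagonal matrix are the
diagonal matrices of the marginal distributions; the von Neumann entropy of a diagonal matrix
is the Shannon entropy of its diagonal. Every coordinate projection is injective on
`{000, 111}`, so `ρ` and each of its six marginals is uniform on two points and has entropy
`log 2`: the two sides of the monogamy inequality are `3 log 2` and `4 log 2`.
-/

open Matrix Real

section Diagonal

variable {n : Type*} [Fintype n] [DecidableEq n]

theorem Matrix.IsHermitian.map_eigenvalues_diagonal {d : n → ℝ}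
    (hd : (diagonal fun i => (d i : ℂ)).IsHermitian) :
    Finset.univ.val.map hd.eigenvalues = Finset.univ.val.map d := by
  have hroots := hd.roots_charpoly_eq_eigenvalues
  rw [charpoly_diagonal, Polynomial.roots_prod _ _
    (Finset.prod_ne_zero_iff.mpr fun i _ => Polynomial.X_sub_C_ne_zero _)] at hroots
  simp only [Polynomial.roots_X_sub_C, Multiset.bind_singleton, ← Multiset.map_map] at hroots
  refine Multiset.map_injective (RCLike.ofReal_injective (K := ℂ)) ?_
  rw [hroots.symm, Multiset.map_map]
  rfl

theorem vnEntropy_diagonal (d : n → ℝ) :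
    vnEntropy (diagonal fun i => (d i : ℂ)) = ∑ i, negMulLog (d i) := by
  have hd : (diagonal fun i => (d i : ℂ)).IsHermitian :=
    isHermitian_diagonal_of_self_adjoint _ (by ext; simp)
  rw [vnEntropy, dif_pos hd]
  simpa only [Finset.sum_eq_multiset_sum, Multiset.map_map, Function.comp_def] using
    congrArg (fun s => (s.map negMulLog).sum) hd.map_eigenvalues_diagonal

end Diagonal

section Uniform

variable {n : Type*} [DecidableEq n]

noncomputable def halfOn (s : Finset n) (x : n) : ℝ := if x ∈ s then 1 / 2 else 0

theorem sum_negMulLog_halfOn [Fintype n] {s : Finset n} (hs : s.card = 2) :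
    ∑ x, negMulLog (halfOn s x) = log 2 := by
  simp only [halfOn, apply_ite negMulLog, negMulLog_zero, Finset.sum_ite_mem, Finset.univ_inter,
    Finset.sum_const, hs]
  simp [negMulLog, log_inv]

theorem vnEntropy_diagonal_halfOn [Fintype n] {s : Finset n} (hs : s.card = 2) :
    vnEntropy (diagonal fun x => (halfOn s x : ℂ)) = log 2 := by
  rw [vnEntropy_diagonal, sum_negMulLog_halfOn hs]

end Uniform

section PartialTrace

variable {a b c : ℕ} (d : Fin a × Fin b × Fin c → ℂ)

theorem rhoAB_diagonal : rhoAB (diagonal d) = diagonal fun p => ∑ k, d (p.1, p.2, k) := by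
  ext ⟨i, j⟩ ⟨i', j'⟩
  by_cases h : (i, j) = (i', j') <;> simp_all [rhoAB, diagonal_apply]

theorem rhoBC_diagonal : rhoBC (diagonal d) = diagonal fun p => ∑ i, d (i, p) := by
  ext p q
  by_cases h : p = q <;> simp_all [rhoBC, diagonal_apply]

theorem rhoCA_diagonal : rhoCA (diagonal d) = diagonal fun p => ∑ j, d (p.1, j, p.2) := by
  ext ⟨i, k⟩ ⟨i', k'⟩
  by_cases h : (i, k) = (i', k') <;> simp_all [rhoCA, diagonal_apply]

theorem rhoA_diagonal : rhoA (diagonal d) = diagonal fun i => ∑ j, ∑ k, d (i, j, k) := by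
  ext i i'
  by_cases h : i = i' <;> simp_all [rhoA, diagonal_apply]

theorem rhoB_diagonal : rhoB (diagonal d) = diagonal fun j => ∑ i, ∑ k, d (i, j, k) := by
  ext j j'
  by_cases h : j = j' <;> simp_all [rhoB, diagonal_apply]

theorem rhoC_diagonal : rhoC (diagonal d) = diagonal fun k => ∑ i, ∑ j, d (i, j, k) := by
  ext k k'
  by_cases h : k = k' <;> simp_all [rhoC, diagonal_apply]

end PartialTrace

theorem ρGHZdiag_eq_diagonal :
    ρGHZdiag = diagonal fun x => (halfOn {(0, 0, 0), (1, 1, 1)} x : ℂ) := by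
  ext x y
  by_cases h : x = y <;> simp_all [ρGHZdiag, halfOn, apply_ite (fun r : ℝ => (r : ℂ))]

theorem rhoAB_ρGHZdiag :
    rhoAB ρGHZdiag = diagonal fun p => (halfOn {(0, 0), (1, 1)} p : ℂ) := by
  rw [ρGHZdiag_eq_diagonal, rhoAB_diagonal]
  congr 1
  ext ⟨i, j⟩
  fin_cases i <;> fin_cases j <;> simp [halfOn, Fin.sum_univ_two]

theorem rhoBC_ρGHZdiag :
    rhoBC ρGHZdiag = diagonal fun p => (halfOn {(0, 0), (1, 1)} p : ℂ) := by
  rw [ρGHZdiag_eq_diagonal, rhoBC_diagonal]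
  congr 1
  ext ⟨j, k⟩
  fin_cases j <;> fin_cases k <;> simp [halfOn, Fin.sum_univ_two]

theorem rhoCA_ρGHZdiag :
    rhoCA ρGHZdiag = diagonal fun p => (halfOn {(0, 0), (1, 1)} p : ℂ) := by
  rw [ρGHZdiag_eq_diagonal, rhoCA_diagonal]
  congr 1
  ext ⟨i, k⟩
  fin_cases i <;> fin_cases k <;> simp [halfOn, Fin.sum_univ_two]

theorem rhoA_ρGHZdiag : rhoA ρGHZdiag = diagonal fun i => (halfOn Finset.univ i : ℂ) := by
  rw [ρGHZdiag_eq_diagonal, rhoA_diagonal]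
  congr 1
  ext i
  fin_cases i <;> simp [halfOn, Fin.sum_univ_two]

theorem rhoB_ρGHZdiag : rhoB ρGHZdiag = diagonal fun j => (halfOn Finset.univ j : ℂ) := by
  rw [ρGHZdiag_eq_diagonal, rhoB_diagonal]
  congr 1
  ext j
  fin_cases j <;> simp [halfOn, Fin.sum_univ_two]

theorem rhoC_ρGHZdiag : rhoC ρGHZdiag = diagonal fun k => (halfOn Finset.univ k : ℂ) := by
  rw [ρGHZdiag_eq_diagonal, rhoC_diagonal]
  congr 1
  ext k
  fin_cases k <;> simp [halfOn, Fin.sum_univ_two]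

/-- The monogamy of mutual information fails for general quantum states:
for `ρ = ½(|000⟩⟨000| + |111⟩⟨111|)` one has
`S_{AB} + S_{BC} + S_{CA} = 3 log 2 < 4 log 2 = S_A + S_B + S_C + S_{ABC}`. -/
theorem monogamy_of_mutual_information_fails :
    vnEntropy (rhoAB ρGHZdiag) + vnEntropy (rhoBC ρGHZdiag)
        + vnEntropy (rhoCA ρGHZdiag) = 3 * Real.log 2 ∧
    vnEntropy (rhoA ρGHZdiag) + vnEntropy (rhoB ρGHZdiag)
        + vnEntropy (rhoC ρGHZdiag) + vnEntropy ρGHZdiag = 4 * Real.log 2 ∧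
    vnEntropy (rhoAB ρGHZdiag) + vnEntropy (rhoBC ρGHZdiag)
        + vnEntropy (rhoCA ρGHZdiag)
      < vnEntropy (rhoA ρGHZdiag) + vnEntropy (rhoB ρGHZdiag)
        + vnEntropy (rhoC ρGHZdiag) + vnEntropy ρGHZdiag := by
  have hpair : ({(0, 0), (1, 1)} : Finset (Fin 2 × Fin 2)).card = 2 := rfl
  have hsingle : (Finset.univ : Finset (Fin 2)).card = 2 := rfl
  have htriple : ({(0, 0, 0), (1, 1, 1)} : Finset (Fin 2 × Fin 2 × Fin 2)).card = 2 := rfl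
  rw [rhoAB_ρGHZdiag, rhoBC_ρGHZdiag, rhoCA_ρGHZdiag, rhoA_ρGHZdiag, rhoB_ρGHZdiag,
    rhoC_ρGHZdiag, ρGHZdiag_eq_diagonal, vnEntropy_diagonal_halfOn hpair,
    vnEntropy_diagonal_halfOn hsingle, vnEntropy_diagonal_halfOn htriple]
  exact ⟨by ring, by ring, by linarith [log_pos one_lt_two]⟩
end

section
/- The Rényi entropy is nonincreasing in the order: for a finite probability distribution p : Fin N → ℝ (pᵢ ≥ 0, ∑ᵢ pᵢ = 1) and real numbers s, t with 0 < s ≤ t, s ≠ 1 and t ≠ 1, one has (1 − t)⁻¹ · log(∑ᵢ pᵢᵗ) ≤ (1 − s)⁻¹ · log(∑ᵢ pᵢˢ), i.e. S_t(p) ≤ S_s(p). -/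
/-!
The function `r ↦ log ∑ᵢ pᵢ ^ r` is convex on `(0, ∞)` by Hölder's inequality, and it vanishes
at `r = 1` because `∑ᵢ pᵢ = 1`. Hence `S_r(p) = -(log ∑ᵢ pᵢ ^ r - 0) / (r - 1)` is minus the slope of
a secant through the point `(1, 0)` of a convex function, and such slopes increase with `r`.
-/

open Finset Real

section
variable {ι : Type*} [Fintype ι] {p : ι → ℝ}

lemma sum_rpow_pos (hp : 0 ≤ p) (hp₀ : p ≠ 0) (r : ℝ) : 0 < ∑ i, p i ^ r := by
  obtain ⟨j, hj⟩ := Function.ne_iff.1 hp₀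
  exact sum_pos' (fun i _ => rpow_nonneg (hp i) r)
    ⟨j, mem_univ j, rpow_pos_of_pos ((hp j).lt_of_ne' hj) r⟩

lemma sum_rpow_mul_add_mul_le (hp : 0 ≤ p) {a b μ ν : ℝ} (ha : 0 < a) (hb : 0 < b)
    (hμ : 0 < μ) (hν : 0 < ν) (hμν : μ + ν = 1) :
    ∑ i, p i ^ (μ * a + ν * b) ≤ (∑ i, p i ^ a) ^ μ * (∑ i, p i ^ b) ^ ν := by
  have holder := inner_le_Lp_mul_Lq_of_nonneg univ (HolderConjugate.inv_inv hμ hν hμν)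
    (f := fun i => p i ^ (μ * a)) (g := fun i => p i ^ (ν * b))
    (fun i _ => rpow_nonneg (hp i) _) (fun i _ => rpow_nonneg (hp i) _)
  have hpow : ∀ i {c : ℝ}, 0 < c → ∀ x, (p i ^ (c * x)) ^ c⁻¹ = p i ^ x := fun i c hc x => by
    rw [← rpow_mul (hp i), mul_comm c, mul_assoc, mul_inv_cancel₀ hc.ne', mul_one]
  simp only [hpow _ hμ, hpow _ hν, one_div, inv_inv] at holder
  refine le_of_eq_of_le (sum_congr rfl fun i _ => ?_) holder
  exact rpow_add' (hp i) (by positivity)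

theorem convexOn_log_sum_rpow (hp : 0 ≤ p) (hp₀ : p ≠ 0) :
    ConvexOn ℝ (Set.Ioi 0) fun r : ℝ => log (∑ i, p i ^ r) := by
  refine convexOn_iff_forall_pos.2 ⟨convex_Ioi 0, fun a ha b hb μ ν hμ hν hμν => ?_⟩
  have hA := sum_rpow_pos hp hp₀ a
  have hB := sum_rpow_pos hp hp₀ b
  calc log (∑ i, p i ^ (μ * a + ν * b))
      ≤ log ((∑ i, p i ^ a) ^ μ * (∑ i, p i ^ b) ^ ν) :=
        log_le_log (sum_rpow_pos hp hp₀ _) (sum_rpow_mul_add_mul_le hp ha hb hμ hν hμν)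
    _ = μ * log (∑ i, p i ^ a) + ν * log (∑ i, p i ^ b) := by
        rw [log_mul (by positivity) (by positivity), log_rpow hA, log_rpow hB]

end

/-- The Rényi entropy is nonincreasing in the order: for `0 < s ≤ t`, `s ≠ 1 ≠ t`,
`S_t(p) ≤ S_s(p)` where `S_t(p) = (1−t)⁻¹ log ∑ᵢ pᵢᵗ`. -/
theorem renyi_entropy_antitone {N : ℕ} (p : Fin N → ℝ)
    (hp : ∀ i, 0 ≤ p i) (hsum : ∑ i, p i = 1)
    (s t : ℝ) (hs : 0 < s) (hst : s ≤ t) (hs1 : s ≠ 1) (ht1 : t ≠ 1) :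
    (1 - t)⁻¹ * Real.log (∑ i, p i ^ t)
      ≤ (1 - s)⁻¹ * Real.log (∑ i, p i ^ s) := by
  have hp₀ : p ≠ 0 := by
    rintro rfl
    simp at hsum
  have hslope := (convexOn_log_sum_rpow hp hp₀).secant_mono (a := 1) (Set.mem_Ioi.2 one_pos) hs
    (hs.trans_le hst) hs1 ht1 hst
  simp only [rpow_one, hsum, log_one, sub_zero] at hslope
  rw [← neg_sub t 1, ← neg_sub s 1, inv_neg, inv_neg, neg_mul, neg_mul, neg_le_neg_iff,
    inv_mul_eq_div, inv_mul_eq_div]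
  exact hslope
end

section
/- Nonnegativity of the modular entropy: for p : Fin N → ℝ with 0 < pᵢ for all i and ∑ᵢ pᵢ = 1, and any t > 0, one has log(∑ᵢ pᵢᵗ) − t · (∑ᵢ pᵢᵗ · log pᵢ) / (∑ᵢ pᵢᵗ) ≥ 0. (This is the statement S̃(t) = (1 − t·∂_t) log Z(t) ≥ 0 for the partition function Z(t) = ∑ᵢ pᵢᵗ, equivalent to the Rényi inequality ∂ₙ[((n−1)/n)Sₙ] ≥ 0.) -/
/-!
With `qᵢ = pᵢᵗ` and `Z = ∑ᵢ qᵢ`, the modular entropy is `log Z - (∑ᵢ qᵢ log qᵢ) / Z`, the Shannon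
entropy of the escort distribution `qᵢ / Z`. It is nonnegative because each `qᵢ ≤ Z`, so
`qᵢ log qᵢ ≤ qᵢ log Z`.
-/

open Finset Real

theorem Real.sum_mul_log_le_sum_mul_log_sum {ι : Type*} (s : Finset ι) (q : ι → ℝ)
    (hq : ∀ i ∈ s, 0 ≤ q i) :
    ∑ i ∈ s, q i * log (q i) ≤ (∑ i ∈ s, q i) * log (∑ i ∈ s, q i) := by
  rw [sum_mul]
  refine sum_le_sum fun i hi => ?_
  rcases (hq i hi).eq_or_lt with hqi | hqi
  · simp [← hqi]
  · exact mul_le_mul_of_nonneg_left (log_le_log hqi (single_le_sum hq hi)) hqi.le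

theorem Real.sum_mul_log_div_sum_le_log_sum {ι : Type*} (s : Finset ι) (q : ι → ℝ)
    (hq : ∀ i ∈ s, 0 ≤ q i) :
    (∑ i ∈ s, q i * log (q i)) / ∑ i ∈ s, q i ≤ log (∑ i ∈ s, q i) := by
  rcases (sum_nonneg hq).eq_or_lt with hZ | hZ
  · simp [← hZ]
  · rw [div_le_iff₀ hZ, mul_comm]
    exact sum_mul_log_le_sum_mul_log_sum s q hq

theorem modular_entropy_nonneg_general {N : ℕ} (p : Fin N → ℝ)
    (hp : ∀ i, 0 < p i)
    (t : ℝ) :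
    0 ≤ Real.log (∑ i, p i ^ t)
        - t * ((∑ i, p i ^ t * Real.log (p i)) / (∑ i, p i ^ t)) := by
  have hlog : t * ∑ i, p i ^ t * log (p i) = ∑ i, p i ^ t * log (p i ^ t) := by
    rw [mul_sum]
    exact sum_congr rfl fun i _ => by rw [log_rpow (hp i)]; ring
  have hescort := sum_mul_log_div_sum_le_log_sum univ (fun i => p i ^ t)
    fun i _ => (rpow_pos_of_pos (hp i) t).le
  rw [mul_div_assoc', hlog]
  linarith

/-- Nonnegativity of the modular entropy `S̃(t) = (1 − t∂_t) log Z(t) ≥ 0` for the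
partition function `Z(t) = ∑ᵢ pᵢᵗ` of a probability distribution with strictly
positive weights. -/
theorem modular_entropy_nonneg {N : ℕ} (p : Fin N → ℝ)
    (hp : ∀ i, 0 < p i) (hsum : ∑ i, p i = 1)
    (t : ℝ) (ht : 0 < t) :
    0 ≤ Real.log (∑ i, p i ^ t)
        - t * ((∑ i, p i ^ t * Real.log (p i)) / (∑ i, p i ^ t)) :=
  modular_entropy_nonneg_general p hp t
end

section
/- The reduced density matrix of one of two coupled harmonic oscillators is a Gaussian kernel: let ω₊, ω₋ > 0, set β = (ω₊ − ω₋)²/(4(ω₊ + ω₋)) and γ = 2ω₊ω₋/(ω₊ + ω₋) + β, and let Ψ : ℝ → ℝ → ℝ be the ground-state wave function Ψ(x,y) = ((ω₊·ω₋)^(1/4)/√π) · exp(−(ω₊·(x+y)² + ω₋·(x−y)²)/4). Then for all real x, x′: ∫_{y ∈ ℝ} Ψ(x,y)·Ψ(x′,y) dy = √((γ−β)/π) · exp(−(γ/2)·(x² + x′²) + β·x·x′). -/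
open MeasureTheory Real

/-!
In the variable `y` the product `Ψ(x,y) Ψ(x′,y)` is `exp` of a quadratic polynomial with leading
coefficient `-(ω₊ + ω₋)/2`, so completing the square reduces the integral to the Gaussian integral
`∫ exp (-a y²) = √(π/a)`. What remains is to recognise the prefactor and the exponent in terms of
`β` and `γ`.
-/

theorem integral_exp_neg_mul_sq_add_mul {a : ℝ} (ha : 0 < a) (b : ℝ) :
    ∫ y : ℝ, exp (-a * y ^ 2 + b * y) = √(π / a) * exp (b ^ 2 / (4 * a)) := by
  have complete_square (y : ℝ) : exp (-a * y ^ 2 + b * y)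
      = exp (b ^ 2 / (4 * a)) * exp (-a * (y - b / (2 * a)) ^ 2) := by
    rw [← exp_add]
    congr 1
    field_simp
    ring
  simp_rw [complete_square]
  rw [integral_const_mul, integral_sub_right_eq_self (fun y => exp (-a * y ^ 2)),
    integral_gaussian, mul_comm]

theorem integral_exp_normal_modes_mul_exp_normal_modes {p q : ℝ} (hpq : 0 < p + q) (x x' : ℝ) :
    ∫ y : ℝ, exp (-(p * (x + y) ^ 2 + q * (x - y) ^ 2) / 4) *
        exp (-(p * (x' + y) ^ 2 + q * (x' - y) ^ 2) / 4)
      = √(2 * π / (p + q)) *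
        exp (-(p + q) * (x ^ 2 + x' ^ 2) / 4 + (p - q) ^ 2 * (x + x') ^ 2 / (8 * (p + q))) := by
  have quadratic_in_y (y : ℝ) : exp (-(p * (x + y) ^ 2 + q * (x - y) ^ 2) / 4) *
        exp (-(p * (x' + y) ^ 2 + q * (x' - y) ^ 2) / 4)
      = exp (-(p + q) * (x ^ 2 + x' ^ 2) / 4) *
        exp (-((p + q) / 2) * y ^ 2 + (-(p - q) * (x + x') / 2) * y) := by
    rw [← exp_add, ← exp_add]
    ring_nf
  simp_rw [quadratic_in_y]
  rw [integral_const_mul, integral_exp_neg_mul_sq_add_mul (by positivity), mul_left_comm,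
    ← exp_add]
  congr 2
  · field_simp
  · field_simp
    ring

theorem rpow_one_fourth_sq {x : ℝ} (hx : 0 ≤ x) : (x ^ (1 / 4 : ℝ)) ^ 2 = √x := by
  rw [← rpow_mul_natCast hx, sqrt_eq_rpow]
  norm_num

/-- The reduced density matrix of one of two coupled harmonic oscillators is a
Gaussian (Mehler) kernel: `ρ_A(x,x′) = ∫ Ψ(x,y)Ψ(x′,y) dy
= √((γ−β)/π) · exp(−(γ/2)(x² + x′²) + β·x·x′)`. -/
theorem reduced_density_matrix_gaussian
    (ωp ωm : ℝ) (hωp : 0 < ωp) (hωm : 0 < ωm)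
    (β γ : ℝ)
    (hβ : β = (ωp - ωm) ^ 2 / (4 * (ωp + ωm)))
    (hγ : γ = 2 * ωp * ωm / (ωp + ωm) + β)
    (Ψ : ℝ → ℝ → ℝ)
    (hΨ : ∀ x y, Ψ x y = ((ωp * ωm) ^ ((1 : ℝ) / 4) / Real.sqrt Real.pi) *
        Real.exp (-(ωp * (x + y) ^ 2 + ωm * (x - y) ^ 2) / 4))
    (x x' : ℝ) :
    (∫ y : ℝ, Ψ x y * Ψ x' y)
      = Real.sqrt ((γ - β) / Real.pi) *
        Real.exp (-(γ / 2) * (x ^ 2 + x' ^ 2) + β * x * x') := by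
  have hsum : 0 < ωp + ωm := by positivity
  have prefactor : ((ωp * ωm) ^ ((1 : ℝ) / 4) / √π) ^ 2 * √(2 * π / (ωp + ωm))
      = √((γ - β) / π) := by
    rw [div_pow, rpow_one_fourth_sq (by positivity), sq_sqrt pi_pos.le, div_mul_eq_mul_div,
      ← sqrt_mul (by positivity), ← sqrt_sq pi_pos.le, ← sqrt_div (by positivity),
      sqrt_sq pi_pos.le, hγ, add_sub_cancel_right]
    congr 1
    field_simp
  have integrand (y : ℝ) : Ψ x y * Ψ x' y = ((ωp * ωm) ^ ((1 : ℝ) / 4) / √π) ^ 2 *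
      (exp (-(ωp * (x + y) ^ 2 + ωm * (x - y) ^ 2) / 4) *
        exp (-(ωp * (x' + y) ^ 2 + ωm * (x' - y) ^ 2) / 4)) := by
    rw [hΨ, hΨ]
    ring
  simp_rw [integrand]
  rw [integral_const_mul, integral_exp_normal_modes_mul_exp_normal_modes hsum, ← mul_assoc,
    prefactor, hγ, hβ]
  congr 2
  field_simp
  ring
end

section
/- Entropic c-theorem in (1+1) dimensions: let S, S′, S″ : ℝ → ℝ be such that for every R > 0, S has derivative S′(R) at R and S′ has derivative S″(R) at R (HasDerivAt). Assume the strong-subadditivity inequality S(R) + S(r) ≤ 2·S(√(r·R)) holds for all r, R > 0. Then for every R > 0, S′(R) + R·S″(R) ≤ 0; equivalently, the entropic c-function c_E(R) = 3·R·S′(R) has nonpositive derivative, so it is monotonically nonincreasing on (0,∞). -/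
/-!
In the logarithmic variable `t = log R`, strong subadditivity says that `g = S ∘ exp` is midpoint
concave: `g (t + h) + g (t - h) ≤ 2 g t`. Hence `h ↦ g (t + h) + g (t - h)` is maximal at `h = 0`,
so its second derivative there, `2 g'' t = 2 R (S' R + R S'' R)`, is nonpositive. Since
`(3 R S' R)' = 3 (S' R + R S'' R)`, the entropic c-function is nonincreasing.
-/

open Filter Topology Set

theorem IsLocalMax.second_deriv_nonpos {f f' : ℝ → ℝ} {a c : ℝ} (hmax : IsLocalMax f a)
    (hf : ∀ᶠ x in 𝓝 a, HasDerivAt f (f' x) x) (hf' : HasDerivAt f' c a) : c ≤ 0 := by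
  by_contra! hc
  have hcrit : f' a = 0 := hmax.hasDerivAt_eq_zero hf.self_of_nhds
  have hpos : ∀ᶠ x in 𝓝[>] a, 0 < f' x := by
    filter_upwards [nhdsGT_le_nhdsNE a
        ((hasDerivAt_iff_tendsto_slope.mp hf').eventually (eventually_gt_nhds hc)),
      self_mem_nhdsWithin] with x hslope hx
    exact pos_of_slope_pos hx hslope hcrit
  obtain ⟨b, hab, hb⟩ := (nhdsGT_basis a).eventually_iff.mp
    (hpos.and (nhdsWithin_le_nhds (hf.and hmax)))
  obtain ⟨x, hax, hxb⟩ := exists_between hab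
  have hderiv : ∀ y ∈ Icc a x, HasDerivAt f (f' y) y := by
    rintro y ⟨hay, hyx⟩
    rcases hay.eq_or_lt with rfl | hay
    · exact hf.self_of_nhds
    · exact (hb ⟨hay, hyx.trans_lt hxb⟩).2.1
  obtain ⟨ξ, hξ, hslope⟩ := exists_hasDerivAt_eq_slope f f' hax
    (fun y hy => (hderiv y hy).continuousAt.continuousWithinAt)
    (fun y hy => hderiv y (Ioo_subset_Icc_self hy))
  have hincr : f a < f x := by
    have hslope_pos := hslope ▸ (hb ⟨hξ.1, hξ.2.trans hxb⟩).1
    linarith [(div_pos_iff_of_pos_right (sub_pos.mpr hax)).mp hslope_pos]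
  exact hincr.not_ge (hb ⟨hax, hxb⟩).2.2

theorem second_deriv_nonpos_of_midpoint_concave {g g' : ℝ → ℝ} {t c : ℝ}
    (hmid : ∀ h, g (t + h) + g (t - h) ≤ 2 * g t)
    (hg : ∀ᶠ u in 𝓝 t, HasDerivAt g (g' u) u) (hg' : HasDerivAt g' c t) : c ≤ 0 := by
  have hmax : IsLocalMax (fun h => g (t + h) + g (t - h)) 0 :=
    IsMaxOn.isLocalMax (fun h _ => by simpa [two_mul] using hmid h) univ_mem
  have hplus : Tendsto (t + ·) (𝓝 0) (𝓝 t) := by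
    simpa using (continuous_const_add t).tendsto 0
  have hminus : Tendsto (t - ·) (𝓝 0) (𝓝 t) := by
    simpa using (continuous_sub_left t).tendsto 0
  have hφ : ∀ᶠ h in 𝓝 0, HasDerivAt (fun h => g (t + h) + g (t - h))
      (g' (t + h) - g' (t - h)) h := by
    filter_upwards [hplus.eventually hg, hminus.eventually hg] with h hp hm
    exact (hp.comp_const_add t h).fun_add (hm.comp_const_sub t h)
  have hφ' : HasDerivAt (fun h => g' (t + h) - g' (t - h)) (c + c) 0 := by
    have hp := HasDerivAt.comp_const_add t 0 (by simpa using hg')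
    have hm := HasDerivAt.comp_const_sub t 0 (by simpa using hg')
    simpa using hp.fun_sub hm
  linarith [hmax.second_deriv_nonpos hφ hφ']

open Real

theorem midpoint_concave_comp_exp {S : ℝ → ℝ}
    (hssa : ∀ r > (0 : ℝ), ∀ R > (0 : ℝ), S R + S r ≤ 2 * S (√(r * R))) (t h : ℝ) :
    S (exp (t + h)) + S (exp (t - h)) ≤ 2 * S (exp t) := by
  have hgeom : √(exp (t - h) * exp (t + h)) = exp t := by
    rw [← exp_add, show t - h + (t + h) = t + t by ring, exp_add, sqrt_mul_self (exp_pos t).le]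
  simpa [hgeom] using hssa _ (exp_pos (t - h)) _ (exp_pos (t + h))

theorem deriv_add_mul_second_deriv_nonpos {S S' S'' : ℝ → ℝ}
    (hd1 : ∀ R > (0 : ℝ), HasDerivAt S (S' R) R)
    (hd2 : ∀ R > (0 : ℝ), HasDerivAt S' (S'' R) R)
    (hssa : ∀ r > (0 : ℝ), ∀ R > (0 : ℝ), S R + S r ≤ 2 * S (√(r * R)))
    {R : ℝ} (hR : 0 < R) : S' R + R * S'' R ≤ 0 := by
  have hg : ∀ u, HasDerivAt (fun u => S (exp u)) (S' (exp u) * exp u) u := fun u =>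
    (hd1 _ (exp_pos u)).comp u (hasDerivAt_exp u)
  have hg' : HasDerivAt (fun u => S' (exp u) * exp u) (R * (S' R + R * S'' R)) (log R) := by
    refine (((hd2 _ (exp_pos _)).comp _ (hasDerivAt_exp _)).fun_mul
      (hasDerivAt_exp _)).congr_deriv ?_
    simp only [Function.comp_apply, exp_log hR]
    ring
  exact nonpos_of_mul_nonpos_right (second_deriv_nonpos_of_midpoint_concave
    (midpoint_concave_comp_exp hssa (log R)) (Eventually.of_forall hg) hg') hR

/-- The entropic c-theorem in (1+1) dimensions: if the entanglement entropy `S` of an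
interval satisfies the strong-subadditivity inequality `S(R) + S(r) ≤ 2·S(√(rR))`
for all `r, R > 0`, then `S′(R) + R·S″(R) ≤ 0` for all `R > 0`; equivalently the
entropic c-function `c_E(R) = 3·R·S′(R)` is monotonically nonincreasing on `(0,∞)`. -/
theorem entropic_c_theorem (S S' S'' : ℝ → ℝ)
    (hd1 : ∀ R > (0 : ℝ), HasDerivAt S (S' R) R)
    (hd2 : ∀ R > (0 : ℝ), HasDerivAt S' (S'' R) R)
    (hssa : ∀ r > (0 : ℝ), ∀ R > (0 : ℝ),
      S R + S r ≤ 2 * S (Real.sqrt (r * R))) :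
    (∀ R > (0 : ℝ), S' R + R * S'' R ≤ 0) ∧
    AntitoneOn (fun R => 3 * R * S' R) (Set.Ioi (0 : ℝ)) := by
  have hpoint : ∀ R > (0 : ℝ), S' R + R * S'' R ≤ 0 := fun R hR =>
    deriv_add_mul_second_deriv_nonpos hd1 hd2 hssa hR
  have hcE : ∀ R ∈ Ioi (0 : ℝ),
      HasDerivAt (fun R => 3 * R * S' R) (3 * (S' R + R * S'' R)) R := fun R hR =>
    (((hasDerivAt_id' R).const_mul 3).mul (hd2 R hR)).congr_deriv (by ring)
  refine ⟨hpoint, antitoneOn_of_hasDerivWithinAt_nonpos (f' := fun R => 3 * (S' R + R * S'' R))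
    (convex_Ioi 0) (fun R hR => (hcE R hR).continuousAt.continuousWithinAt) ?_ ?_⟩
    <;> rw [interior_Ioi]
  · exact fun R hR => (hcE R hR).hasDerivWithinAt
  · exact fun R hR => by linarith [hpoint R hR]
end

section
/- F-theorem in (2+1) dimensions (monotonicity step): let S : ℝ → ℝ be twice continuously differentiable on (0,∞) (ContDiffOn ℝ 2 S (Set.Ioi 0)). Assume that for all r, R with 0 < r ≤ R the averaged strong-subadditivity inequality ∫_{θ=0}^{π} S( 2·r·R / (R + r − (R − r)·cos θ) ) dθ ≤ π · S(√(r·R)) holds (interval integral). Then S is concave on (0,∞): for every R > 0 the second derivative satisfies deriv (deriv S) R ≤ 0; consequently the renormalized entanglement entropy 𝓕(R) := R·(deriv S R) − S(R) satisfies deriv 𝓕 R = R·(deriv (deriv S) R) ≤ 0, so 𝓕 is monotonically nonincreasing on (0,∞). -/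
/-!
The boosted radii `a(θ) = 2rR/(R + r - (R - r) cos θ)` sweep `[r, R]` and their mean over
`[0, π]` is exactly `√(rR)`. If `S''(x) > 0` at some `x > 0`, then `S` is strictly convex on an
interval `[r, R]` around `x = √(rR)`, so `S` lies strictly above its tangent line at `x`;
integrating along `a(θ)`, the linear part averages to `S(x)`, and hence
`π S(√(rR)) < ∫ S(a(θ)) dθ`, contradicting strong subadditivity. Monotonicity of
`𝓕 = R S' - S` then follows from `𝓕' = R S''`.
-/

open Real Set

lemma sub_mul_cos_pos {p q : ℝ} (h : |q| < p) (θ : ℝ) : 0 < p - q * cos θ :=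
  sub_pos.2 <| calc
    q * cos θ ≤ |q| * |cos θ| := (le_abs_self _).trans (abs_mul _ _).le
    _ ≤ |q| := mul_le_of_le_one_right (abs_nonneg q) (abs_cos_le_one θ)
    _ < p := h

/- On `(-π, π)` this agrees with the Weierstrass-substitution antiderivative
`(2/s) arctan (√((p+q)/(p-q)) tan (θ/2))`, but unlike it, it is smooth across `θ = π`. -/
lemma hasDerivAt_antideriv_inv_sub_mul_cos {p q : ℝ} (h : |q| < p) (θ : ℝ) :
    HasDerivAt (fun x ↦ (x + 2 * arctan (q * sin x / (p + √(p ^ 2 - q ^ 2) - q * cos x)))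
      / √(p ^ 2 - q ^ 2)) (p - q * cos θ)⁻¹ θ := by
  set s := √(p ^ 2 - q ^ 2)
  have hpq : 0 < p ^ 2 - q ^ 2 :=
    sub_pos.2 (sq_abs q ▸ pow_lt_pow_left₀ h (abs_nonneg q) two_ne_zero)
  have hs2 : s ^ 2 = p ^ 2 - q ^ 2 := sq_sqrt hpq.le
  have hs : 0 < s := sqrt_pos.2 hpq
  have hden : ∀ x, 0 < p + s - q * cos x := fun x ↦ by
    have := sub_mul_cos_pos h x; linarith
  have hquot : HasDerivAt (fun x ↦ q * sin x / (p + s - q * cos x))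
      ((q * cos θ * (p + s - q * cos θ) - q * sin θ * (q * sin θ)) /
        (p + s - q * cos θ) ^ 2) θ := by
    refine ((hasDerivAt_sin θ).const_mul q).div ?_ (hden θ).ne'
    simpa using ((hasDerivAt_cos θ).const_mul q).const_sub (p + s)
  refine (((hasDerivAt_id θ).add (hquot.arctan.const_mul 2)).div_const s).congr_deriv ?_
  have hθ := sin_sq_add_cos_sq θ
  have hdenθ := hden θ
  have hθpos := sub_mul_cos_pos h θ
  field_simp
  linear_combination (q ^ 3 * cos θ - p * q ^ 2 - s * q ^ 2) * hθ + (q * cos θ - p - s) * hs2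

theorem integral_inv_sub_mul_cos {p q : ℝ} (h : |q| < p) :
    ∫ θ in (0 : ℝ)..π, (p - q * cos θ)⁻¹ = π / √(p ^ 2 - q ^ 2) := by
  have hcont : Continuous fun θ ↦ (p - q * cos θ)⁻¹ := by
    have := fun θ ↦ (sub_mul_cos_pos h θ).ne'
    fun_prop (disch := assumption)
  rw [intervalIntegral.integral_eq_sub_of_hasDerivAt
    (fun θ _ ↦ hasDerivAt_antideriv_inv_sub_mul_cos h θ) (hcont.intervalIntegrable 0 π)]
  simp

/-- Radius of the boosted disk at angle `θ` in the family of disks touching the null cone that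
interpolates between the disks of radii `R` (at `θ = 0`) and `r` (at `θ = π`). -/
noncomputable def boostedRadius (r R θ : ℝ) : ℝ := 2 * r * R / (R + r - (R - r) * cos θ)

section boostedRadius

variable {r R : ℝ}

lemma boostedRadius_denom_pos (hr : 0 < r) (hR : 0 < R) (θ : ℝ) :
    0 < R + r - (R - r) * cos θ :=
  sub_mul_cos_pos (abs_sub_lt_iff.2 ⟨by linarith, by linarith⟩) θ

lemma continuous_boostedRadius (hr : 0 < r) (hR : 0 < R) : Continuous (boostedRadius r R) := by
  have := fun θ ↦ (boostedRadius_denom_pos hr hR θ).ne'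
  unfold boostedRadius
  fun_prop (disch := assumption)

lemma boostedRadius_zero (hr : 0 < r) : boostedRadius r R 0 = R := by
  rw [boostedRadius, cos_zero, mul_one, show R + r - (R - r) = 2 * r by ring]
  field_simp

lemma boostedRadius_mem_Icc (hr : 0 < r) (hrR : r ≤ R) (θ : ℝ) :
    boostedRadius r R θ ∈ Icc r R := by
  have hD := boostedRadius_denom_pos hr (hr.trans_le hrR) θ
  have hRr : 0 ≤ R - r := sub_nonneg.2 hrR
  have hc : 0 ≤ 1 + cos θ := by linarith [neg_one_le_cos θ]
  have hc' : 0 ≤ 1 - cos θ := by linarith [cos_le_one θ]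
  rw [boostedRadius, mem_Icc, le_div_iff₀ hD, div_le_iff₀ hD]
  constructor
  · nlinarith [mul_nonneg hr.le (mul_nonneg hRr hc)]
  · nlinarith [mul_nonneg (hr.le.trans hrR) (mul_nonneg hRr hc')]

theorem integral_boostedRadius (hr : 0 < r) (hR : 0 < R) :
    ∫ θ in (0 : ℝ)..π, boostedRadius r R θ = π * √(r * R) := by
  have hsqrt : √((R + r) ^ 2 - (R - r) ^ 2) = 2 * √(r * R) := by
    rw [show (R + r) ^ 2 - (R - r) ^ 2 = 2 ^ 2 * (r * R) by ring, sqrt_mul (by positivity),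
      sqrt_sq zero_le_two]
  simp only [boostedRadius, div_eq_mul_inv, intervalIntegral.integral_const_mul]
  rw [integral_inv_sub_mul_cos (abs_sub_lt_iff.2 ⟨by linarith, by linarith⟩), hsqrt]
  field_simp
  rw [sq_sqrt (mul_pos hr hR).le]

end boostedRadius

lemma StrictConvexOn.add_mul_sub_lt {D : Set ℝ} {f : ℝ → ℝ} {x y f' : ℝ}
    (hf : StrictConvexOn ℝ D f) (hx : x ∈ D) (hy : y ∈ D) (hxy : y ≠ x)
    (hf' : HasDerivAt f f' x) : f x + f' * (y - x) < f y := by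
  rcases hxy.lt_or_gt with hlt | hlt
  · have := hf.slope_lt_of_hasDerivAt hy hx hlt hf'
    rw [slope_def_field, div_lt_iff₀ (sub_pos.2 hlt)] at this
    linarith
  · have := hf.lt_slope_of_hasDerivAt hx hy hlt hf'
    rw [slope_def_field, lt_div_iff₀ (sub_pos.2 hlt)] at this
    linarith

theorem StrictConvexOn.pi_mul_apply_sqrt_lt_integral_comp_boostedRadius
    {f : ℝ → ℝ} {r R : ℝ}
    (hf : StrictConvexOn ℝ (Icc r R) f) (hfc : ContinuousOn f (Icc r R))
    (hr : 0 < r) (hrR : r < R) (hfd : DifferentiableAt ℝ f √(r * R)) :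
    π * f √(r * R) < ∫ θ in (0 : ℝ)..π, f (boostedRadius r R θ) := by
  set m := √(r * R)
  have hR : 0 < R := hr.trans hrR
  have hm : m ∈ Icc r R := by
    constructor
    · exact le_sqrt_of_sq_le (by nlinarith)
    · exact sqrt_le_iff.2 ⟨hR.le, by nlinarith⟩
  have hmR : m < R := (sqrt_lt' hR).2 (by nlinarith)
  have hρ := continuous_boostedRadius hr hR
  have hρIcc := boostedRadius_mem_Icc hr hrR.le
  have htangent : ∀ θ,
      f m + deriv f m * (boostedRadius r R θ - m) ≤ f (boostedRadius r R θ) := by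
    intro θ
    rcases eq_or_ne (boostedRadius r R θ) m with h | h
    · simp [h]
    · exact (hf.add_mul_sub_lt hm (hρIcc θ) h hfd.hasDerivAt).le
  have hlin : Continuous fun θ ↦ deriv f m * (boostedRadius r R θ - m) := by fun_prop
  calc π * f m = ∫ θ in (0 : ℝ)..π, (f m + deriv f m * (boostedRadius r R θ - m)) := by
        rw [intervalIntegral.integral_add intervalIntegrable_const (hlin.intervalIntegrable _ _),
          intervalIntegral.integral_const_mul,
          intervalIntegral.integral_sub (hρ.intervalIntegrable _ _) intervalIntegrable_const,
          integral_boostedRadius hr hR]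
        simp [m]
    _ < ∫ θ in (0 : ℝ)..π, f (boostedRadius r R θ) := by
        have hfρ : Continuous fun θ ↦ f (boostedRadius r R θ) := hfc.comp_continuous hρ hρIcc
        refine intervalIntegral.integral_lt_integral_of_continuousOn_of_le_of_exists_lt pi_pos
          (by fun_prop) hfρ.continuousOn (fun θ _ ↦ htangent θ)
          ⟨0, left_mem_Icc.2 pi_pos.le, ?_⟩
        rw [boostedRadius_zero hr]
        exact hf.add_mul_sub_lt hm (right_mem_Icc.2 hrR.le) hmR.ne' hfd.hasDerivAt

theorem deriv2_nonpos_of_integral_comp_boostedRadius_le {S : ℝ → ℝ}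
    (hS : ContDiffOn ℝ 2 S (Ioi 0))
    (hssa : ∀ r R : ℝ, 0 < r → r ≤ R →
      ∫ θ in (0 : ℝ)..π, S (boostedRadius r R θ) ≤ π * S √(r * R))
    {x : ℝ} (hx : 0 < x) : deriv (deriv S) x ≤ 0 := by
  by_contra! hpos
  have hS1 : ContDiffOn ℝ 1 (deriv S) (Ioi 0) := hS.deriv_of_isOpen isOpen_Ioi (by norm_num)
  have hcont : ContinuousAt (deriv (deriv S)) x :=
    (hS1.continuousOn_deriv_of_isOpen isOpen_Ioi le_rfl).continuousAt (Ioi_mem_nhds hx)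
  obtain ⟨δ, hδ, hball⟩ :
      ∃ δ > 0, Metric.ball x δ ⊆ Ioi 0 ∩ {y | 0 < deriv (deriv S) y} :=
    Metric.mem_nhds_iff.1 (Filter.inter_mem (Ioi_mem_nhds hx) (hcont.eventually (lt_mem_nhds hpos)))
  set R := x + δ / 2 with hR_def
  set r := x ^ 2 / R
  have hR : 0 < R := by positivity
  have hr : 0 < r := by positivity
  have hrx : x - δ < r ∧ r < x := by
    constructor
    · rw [lt_div_iff₀ hR, hR_def]; nlinarith
    · rw [div_lt_iff₀ hR, hR_def]; nlinarith
  have hrR : r < R := by linarith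
  have hsqrt : √(r * R) = x := by
    rw [div_mul_cancel₀ _ hR.ne', sqrt_sq hx.le]
  have hIcc : Icc r R ⊆ Ioi 0 ∩ {y | 0 < deriv (deriv S) y} :=
    (Icc_subset_Ioo hrx.1 (by linarith [hR_def])).trans (Real.ball_eq_Ioo x δ ▸ hball)
  have hSc : ContinuousOn S (Icc r R) := hS.continuousOn.mono fun y hy ↦ (hIcc hy).1
  have hconv : StrictConvexOn ℝ (Icc r R) S :=
    strictConvexOn_of_deriv2_pos' (convex_Icc r R) hSc fun y hy ↦ (hIcc hy).2
  have hSd : DifferentiableAt ℝ S √(r * R) :=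
    hsqrt ▸ (hS.differentiableOn (by norm_num)).differentiableAt (Ioi_mem_nhds hx)
  linarith [hssa r R hr hrR.le,
    hconv.pi_mul_apply_sqrt_lt_integral_comp_boostedRadius hSc hr hrR hSd]

lemma hasDerivAt_mul_deriv_sub {f : ℝ → ℝ} {x : ℝ} (hf : DifferentiableAt ℝ f x)
    (hf' : DifferentiableAt ℝ (deriv f) x) :
    HasDerivAt (fun y ↦ y * deriv f y - f y) (x * deriv (deriv f) x) x :=
  (((hasDerivAt_id' x).mul hf'.hasDerivAt).sub hf.hasDerivAt).congr_deriv (by ring)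

/-- The monotonicity step of the F-theorem in (2+1) dimensions: if the disk
entanglement entropy `S` is twice continuously differentiable on `(0,∞)` and
satisfies the averaged strong-subadditivity inequality
`∫₀^π S(2rR/(R+r−(R−r)cos θ)) dθ ≤ π·S(√(rR))` for all `0 < r ≤ R`, then `S` is
concave on `(0,∞)` and the renormalized entanglement entropy
`𝓕(R) = R·S′(R) − S(R)` is monotonically nonincreasing on `(0,∞)`. -/
theorem F_theorem_monotonicity (S : ℝ → ℝ)
    (hS : ContDiffOn ℝ 2 S (Set.Ioi (0 : ℝ)))
    (hssa : ∀ r R : ℝ, 0 < r → r ≤ R →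
      (∫ θ in (0 : ℝ)..Real.pi,
          S (2 * r * R / (R + r - (R - r) * Real.cos θ)))
        ≤ Real.pi * S (Real.sqrt (r * R))) :
    (∀ R > (0 : ℝ), deriv (deriv S) R ≤ 0) ∧
    AntitoneOn (fun R => R * deriv S R - S R) (Set.Ioi (0 : ℝ)) := by
  have hconcave : ∀ R > (0 : ℝ), deriv (deriv S) R ≤ 0 :=
    fun R hR ↦ deriv2_nonpos_of_integral_comp_boostedRadius_le hS hssa hR
  have hS1 : ContDiffOn ℝ 1 (deriv S) (Ioi 0) := hS.deriv_of_isOpen isOpen_Ioi (by norm_num)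
  have hF : ∀ x ∈ Ioi (0 : ℝ),
      HasDerivAt (fun R ↦ R * deriv S R - S R) (x * deriv (deriv S) x) x := fun x hx ↦
    hasDerivAt_mul_deriv_sub
      ((hS.differentiableOn (by norm_num)).differentiableAt (Ioi_mem_nhds hx))
      ((hS1.differentiableOn one_ne_zero).differentiableAt (Ioi_mem_nhds hx))
  refine ⟨hconcave, antitoneOn_of_hasDerivWithinAt_nonpos (convex_Ioi 0)
    (f' := fun x ↦ x * deriv (deriv S) x)
    (fun x hx ↦ (hF x hx).continuousAt.continuousWithinAt) ?_ ?_⟩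
  all_goals rw [interior_Ioi]
  · exact fun x hx ↦ (hF x hx).hasDerivWithinAt
  · exact fun x (hx : 0 < x) ↦ mul_nonpos_of_nonneg_of_nonpos hx.le (hconcave x hx)
end

section
/- Iterated strong subadditivity for submodular set functions: let α be a type, f : Set α → ℝ a function satisfying f(X ∪ Y) + f(X ∩ Y) ≤ f(X) + f(Y) for all X, Y : Set α, let N ≥ 1 and X : Fin N → Set α. For 1 ≤ k ≤ N define Y_k := ⋃_{I : Finset (Fin N), I.card = k} ⋂_{i ∈ I} X i (the union of all k-fold intersections), so that Y_1 = ⋃ᵢ Xᵢ and Y_N = ⋂ᵢ Xᵢ. Then ∑_{k=1}^{N} f(Y_k) ≤ ∑_{i} f(X i). -/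
/-!
A point lies in `Yₖ := interUnion X k` exactly when it lies in at least `k` of the `Xᵢ`.
Hence, if `Y'ₖ` is formed after appending one more region `A`, then `Y'ₖ₊₁ = Yₖ₊₁ ∪ (A ∩ Yₖ)`
and `Yₖ₊₁ ∩ (A ∩ Yₖ) = A ∩ Yₖ₊₁`, so submodularity gives
`f Y'ₖ₊₁ + f (A ∩ Yₖ₊₁) ≤ f Yₖ₊₁ + f (A ∩ Yₖ)`. Summed over `k ≤ N`, the terms `f (A ∩ Yₖ)`
telescope from `f (A ∩ Y₀) = f A` to `f (A ∩ Y_{N+1}) = f ∅`, which is the induction step on `N`.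
-/

def interUnion {α : Type*} {N : ℕ} (X : Fin N → Set α) (k : ℕ) : Set α :=
  ⋃ (I : Finset (Fin N)) (_ : I.card = k), ⋂ i ∈ I, X i

open Finset

theorem sum_range_add_le_of_add_succ_le {β : Type*} [AddCommMonoid β] [PartialOrder β]
    [IsOrderedAddMonoid β] {a b g : ℕ → β} {n : ℕ} (h : ∀ k < n, a k + g (k + 1) ≤ b k + g k) :
    ∑ k ∈ range n, a k + g n ≤ ∑ k ∈ range n, b k + g 0 := by
  induction n with
  | zero => simp
  | succ n ih =>
    calc ∑ k ∈ range (n + 1), a k + g (n + 1)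
        = ∑ k ∈ range n, a k + (a n + g (n + 1)) := by rw [sum_range_succ, add_assoc]
      _ ≤ ∑ k ∈ range n, a k + (b n + g n) := add_le_add_right (h n n.lt_succ_self) _
      _ = (∑ k ∈ range n, a k + g n) + b n := by abel
      _ ≤ (∑ k ∈ range n, b k + g 0) + b n := add_le_add_left (ih fun k hk => h k (by omega)) _
      _ = ∑ k ∈ range (n + 1), b k + g 0 := by rw [sum_range_succ]; abel

section interUnion

open Classical

variable {α : Type*} {N : ℕ}

theorem mem_interUnion {X : Fin N → Set α} {k : ℕ} {x : α} :
    x ∈ interUnion X k ↔ k ≤ #{i | x ∈ X i} := by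
  simp only [interUnion, Set.mem_iUnion, Set.mem_iInter, exists_prop]
  constructor
  · rintro ⟨I, rfl, hI⟩
    exact card_le_card fun i hi => mem_filter.2 ⟨mem_univ i, hI i hi⟩
  · intro hk
    obtain ⟨I, hI, rfl⟩ := exists_subset_card_eq hk
    exact ⟨I, rfl, fun i hi => (mem_filter.1 (hI hi)).2⟩

theorem interUnion_zero (X : Fin N → Set α) : interUnion X 0 = Set.univ := by
  ext x
  simp [mem_interUnion]

theorem interUnion_eq_empty_of_lt (X : Fin N → Set α) {k : ℕ} (hk : N < k) :
    interUnion X k = ∅ := by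
  ext x
  simp only [mem_interUnion, Set.mem_empty_iff_false, iff_false, not_le]
  exact (card_filter_le _ _).trans_lt (by simpa using hk)

theorem interUnion_succ_subset (X : Fin N → Set α) (k : ℕ) :
    interUnion X (k + 1) ⊆ interUnion X k := fun _ hx =>
  mem_interUnion.2 (k.le_succ.trans (mem_interUnion.1 hx))

theorem card_filter_mem_snoc (X : Fin N → Set α) (A : Set α) (x : α) :
    #{i | x ∈ (Fin.snoc X A : Fin (N + 1) → Set α) i} =
      #{i | x ∈ X i} + if x ∈ A then 1 else 0 := by
  simp only [card_filter, Fin.sum_univ_castSucc, Fin.snoc_castSucc, Fin.snoc_last]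

theorem interUnion_snoc_succ (X : Fin N → Set α) (A : Set α) (k : ℕ) :
    interUnion (Fin.snoc X A : Fin (N + 1) → Set α) (k + 1) =
      interUnion X (k + 1) ∪ (A ∩ interUnion X k) := by
  ext x
  simp only [Set.mem_union, Set.mem_inter_iff, mem_interUnion, card_filter_mem_snoc]
  by_cases hxA : x ∈ A <;> simp [hxA]
  omega

end interUnion

section Submodular

variable {α β : Type*} [AddCommMonoid β] [PartialOrder β] {f : Set α → β}
  {N : ℕ}

theorem submodular_interUnion_snoc_succ
    (hsub : ∀ X Y : Set α, f (X ∪ Y) + f (X ∩ Y) ≤ f X + f Y)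
    (X : Fin N → Set α) (A : Set α) (k : ℕ) :
    f (interUnion (Fin.snoc X A : Fin (N + 1) → Set α) (k + 1)) + f (A ∩ interUnion X (k + 1)) ≤
      f (interUnion X (k + 1)) + f (A ∩ interUnion X k) := by
  have hinter : interUnion X (k + 1) ∩ (A ∩ interUnion X k) = A ∩ interUnion X (k + 1) := by
    rw [Set.inter_left_comm, Set.inter_eq_left.2 (interUnion_succ_subset X k)]
  simpa only [interUnion_snoc_succ, hinter] using hsub (interUnion X (k + 1)) (A ∩ interUnion X k)

theorem sum_range_interUnion_succ_le [IsOrderedCancelAddMonoid β]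
    (hsub : ∀ X Y : Set α, f (X ∪ Y) + f (X ∩ Y) ≤ f X + f Y) (X : Fin N → Set α) :
    ∑ k ∈ range N, f (interUnion X (k + 1)) ≤ ∑ i, f (X i) := by
  induction X using Fin.snocInduction with
  | elim0 => simp
  | @snoc N X A ih =>
    have hempty := interUnion_eq_empty_of_lt X N.lt_add_one
    have htele := sum_range_add_le_of_add_succ_le (n := N + 1)
      (g := fun k => f (A ∩ interUnion X k)) fun k _ => submodular_interUnion_snoc_succ hsub X A k
    rw [hempty, sum_range_succ (fun k => f (interUnion X (k + 1))), hempty, interUnion_zero,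
      Set.inter_empty, Set.inter_univ, add_right_comm _ (f ∅)] at htele
    calc ∑ k ∈ range (N + 1), f (interUnion (Fin.snoc X A : Fin (N + 1) → Set α) (k + 1))
        ≤ ∑ k ∈ range N, f (interUnion X (k + 1)) + f A := le_of_add_le_add_right htele
      _ ≤ ∑ i, f (X i) + f A := by gcongr
      _ = ∑ i, f ((Fin.snoc X A : Fin (N + 1) → Set α) i) := by
        simp only [Fin.sum_univ_castSucc, Fin.snoc_castSucc, Fin.snoc_last]

end Submodular

theorem iterated_strong_subadditivity_general {α : Type*} {N : ℕ}
    (f : Set α → ℝ)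
    (hsub : ∀ X Y : Set α, f (X ∪ Y) + f (X ∩ Y) ≤ f X + f Y)
    (X : Fin N → Set α) :
    ∑ k ∈ Finset.Icc 1 N, f (interUnion X k) ≤ ∑ i, f (X i) := by
  rw [← Ico_add_one_right_eq_Icc, ← sum_Ico_add' _ 0 N 1, ← range_eq_Ico]
  exact sum_range_interUnion_succ_le hsub X

/-- Iterated strong subadditivity for submodular set functions:
`f(Y₁) + f(Y₂) + ⋯ + f(Y_N) ≤ ∑ᵢ f(Xᵢ)` where `Y_k` is the union of all
`k`-fold intersections of the `Xᵢ` (so `Y₁ = ⋃ᵢ Xᵢ` and `Y_N = ⋂ᵢ Xᵢ`). -/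
theorem iterated_strong_subadditivity {α : Type*} {N : ℕ} (hN : 1 ≤ N)
    (f : Set α → ℝ)
    (hsub : ∀ X Y : Set α, f (X ∪ Y) + f (X ∩ Y) ≤ f X + f Y)
    (X : Fin N → Set α) :
    ∑ k ∈ Finset.Icc 1 N, f (interUnion X k) ≤ ∑ i, f (X i) :=
  iterated_strong_subadditivity_general f hsub X
end
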